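/- arXiv:2402.05633 — 5 statements merged into one kernel-verified Lean document; each statement's English description precedes it below -/
import Mathlib

section
/- Let a, b, c, h ∈ (0,1) with c ≠ h, and let d, f ∈ [0,1]. Define r = a·(b·c·(1−d) + (1−b)·h·(1−f)) and s = a·(b·(1−c)·(1−d) + (1−b)·(1−h)·(1−f)). Then 1−d = (r − h·r − h·s)/(a·b·(c−h)) and 1−f = (r − c·r − c·s)/(a·(b−1)·(c−h)). -/
theorem binary_colluder_identifying_functional
    (a b c h d f : ℝ)
    (ha : a ∈ Set.Ioo (0:ℝ) 1) (hb : b ∈ Set.Ioo (0:ℝ) 1)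
    (hc : c ∈ Set.Ioo (0:ℝ) 1) (hh : h ∈ Set.Ioo (0:ℝ) 1)
    (hch : c ≠ h)
    (hd : d ∈ Set.Icc (0:ℝ) 1) (hf : f ∈ Set.Icc (0:ℝ) 1)
    (r s : ℝ)
    (hr : r = a * (b * c * (1 - d) + (1 - b) * h * (1 - f)))
    (hs : s = a * (b * (1 - c) * (1 - d) + (1 - b) * (1 - h) * (1 - f))) :
    1 - d = (r - h * r - h * s) / (a * b * (c - h)) ∧
    1 - f = (r - c * r - c * s) / (a * (b - 1) * (c - h)) := by
  have ha0 : a ≠ 0 := ne_of_gt ha.1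
  have hb0 : b ≠ 0 := ne_of_gt hb.1
  have hb1 : b - 1 ≠ 0 := sub_ne_zero.mpr (ne_of_lt hb.2)
  have hch0 : c - h ≠ 0 := sub_ne_zero.mpr hch
  subst hr hs
  constructor <;> field_simp <;> ring
end

section
/- Let a, b, c, h ∈ (0,1) with c ≠ h. For any d, d', f, f' ∈ [0,1], if a·(b·c·(1−d) + (1−b)·h·(1−f)) = a·(b·c·(1−d') + (1−b)·h·(1−f')) and a·(b·(1−c)·(1−d) + (1−b)·(1−h)·(1−f)) = a·(b·(1−c)·(1−d') + (1−b)·(1−h)·(1−f')), then d = d' and f = f'. -/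
theorem binary_colluder_uniqueness
    (a b c h : ℝ)
    (ha : a ∈ Set.Ioo (0:ℝ) 1) (hb : b ∈ Set.Ioo (0:ℝ) 1)
    (hc : c ∈ Set.Ioo (0:ℝ) 1) (hh : h ∈ Set.Ioo (0:ℝ) 1)
    (hch : c ≠ h)
    (d d' f f' : ℝ)
    (hd : d ∈ Set.Icc (0:ℝ) 1) (hd' : d' ∈ Set.Icc (0:ℝ) 1)
    (hf : f ∈ Set.Icc (0:ℝ) 1) (hf' : f' ∈ Set.Icc (0:ℝ) 1)
    (h1 : a * (b * c * (1 - d) + (1 - b) * h * (1 - f)) =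
          a * (b * c * (1 - d') + (1 - b) * h * (1 - f')))
    (h2 : a * (b * (1 - c) * (1 - d) + (1 - b) * (1 - h) * (1 - f)) =
          a * (b * (1 - c) * (1 - d') + (1 - b) * (1 - h) * (1 - f'))) :
    d = d' ∧ f = f' := by
  have ha0 : a ≠ 0 := ne_of_gt ha.1
  have hb0 : b ≠ 0 := ne_of_gt hb.1
  have hb1 : (1 : ℝ) - b ≠ 0 := by have := hb.2; intro h'; linarith
  have hch' : c - h ≠ 0 := sub_ne_zero.mpr hch
  have E1 := mul_left_cancel₀ ha0 h1
  have E2 := mul_left_cancel₀ ha0 h2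
  have key : b * (c - h) * (d - d') = 0 := by linear_combination (h - 1) * E1 + h * E2
  have hdd : d - d' = 0 := by
    rcases mul_eq_zero.mp key with hk | hk
    · exact absurd hk (mul_ne_zero hb0 hch')
    · exact hk
  have hdd' : d = d' := by linarith
  refine ⟨hdd', ?_⟩
  have key2 : (1 - b) * h * (f - f') = 0 := by linear_combination -E1 - b * c * hdd'
  rcases mul_eq_zero.mp key2 with hk | hk
  · exact absurd hk (mul_ne_zero hb1 (ne_of_gt hh.1))
  · linarith
end

section
/- Suppose in the binary colluder model Y⁽¹⁾ is independent of X⁽¹⁾, i.e., c = h. Then there exist distinct pairs (d, f) ≠ (d', f') in [0,1]² such that the resulting observed probabilities agree: a·(b·c·(1−d) + (1−b)·c·(1−f)) = a·(b·c·(1−d') + (1−b)·c·(1−f')) and a·(b·(1−c)·(1−d) + (1−b)·(1−c)·(1−f)) = a·(b·(1−c)·(1−d') + (1−b)·(1−c)·(1−f')). -/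
theorem binary_colluder_nonidentifiable_of_indep
    (a b c : ℝ)
    (ha : a ∈ Set.Ioo (0:ℝ) 1) (hb : b ∈ Set.Ioo (0:ℝ) 1)
    (hc : c ∈ Set.Ioo (0:ℝ) 1) :
    ∃ d f d' f' : ℝ,
      d ∈ Set.Icc (0:ℝ) 1 ∧ f ∈ Set.Icc (0:ℝ) 1 ∧
      d' ∈ Set.Icc (0:ℝ) 1 ∧ f' ∈ Set.Icc (0:ℝ) 1 ∧
      (d, f) ≠ (d', f') ∧
      a * (b * c * (1 - d) + (1 - b) * c * (1 - f)) =
        a * (b * c * (1 - d') + (1 - b) * c * (1 - f')) ∧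
      a * (b * (1 - c) * (1 - d) + (1 - b) * (1 - c) * (1 - f)) =
        a * (b * (1 - c) * (1 - d') + (1 - b) * (1 - c) * (1 - f')) := by
  obtain ⟨hb0, hb1⟩ := hb
  refine ⟨1/2, 1/2, 1 - b/2, (1-b)/2, ⟨by norm_num, by norm_num⟩,
    ⟨by norm_num, by norm_num⟩, ⟨by linarith, by linarith⟩,
    ⟨by linarith, by linarith⟩, ?_, by ring, by ring⟩
  intro h
  have := (Prod.mk.injEq _ _ _ _).mp h
  linarith [this.1]
end

section
/- With parameters a ∈ (0,1), b = 1/4, c = 1/2 (so m = 1−b−c = 1/4), d₁ = d₂ = f₁ = f₂ = n ∈ (0,1), g ≠ k ∈ (0,1), and setting g₁ = g, k₁ = k versus g₂ = k, k₂ = g (all other parameters equal across models), the two ternary colluder model parametrizations yield identical observed-data probabilities: in particular a·(b·g₁ + c·i + m·k₁) = a·(b·g₂ + c·i + m·k₂), a·(b·n·(1−g₁) + c·e·(1−i) + m·n·(1−k₁)) = a·(b·n·(1−g₂) + c·e·(1−i) + m·n·(1−k₂)), and a·(b·(1−n)·(1−g₁) + c·(1−e)·(1−i) + m·(1−n)·(1−k₁))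 = a·(b·(1−n)·(1−g₂) + c·(1−e)·(1−i) + m·(1−n)·(1−k₂)); but the full laws differ since a·b·n·g₁ ≠ a·b·n·g₂. -/
theorem ternary_nonidentifiability_construction
    (a n g k e i : ℝ)
    (ha : a ∈ Set.Ioo (0:ℝ) 1) (hn : n ∈ Set.Ioo (0:ℝ) 1)
    (hg : g ∈ Set.Ioo (0:ℝ) 1) (hk : k ∈ Set.Ioo (0:ℝ) 1)
    (hgk : g ≠ k)
    (b c m g₁ k₁ g₂ k₂ : ℝ)
    (hb : b = 1/4) (hc : c = 1/2) (hm : m = 1 - b - c)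
    (hg₁ : g₁ = g) (hk₁ : k₁ = k) (hg₂ : g₂ = k) (hk₂ : k₂ = g) :
    a * (b * g₁ + c * i + m * k₁) = a * (b * g₂ + c * i + m * k₂) ∧
    a * (b * n * (1 - g₁) + c * e * (1 - i) + m * n * (1 - k₁)) =
      a * (b * n * (1 - g₂) + c * e * (1 - i) + m * n * (1 - k₂)) ∧
    a * (b * (1 - n) * (1 - g₁) + c * (1 - e) * (1 - i) + m * (1 - n) * (1 - k₁)) =
      a * (b * (1 - n) * (1 - g₂) + c * (1 - e) * (1 - i) + m * (1 - n) * (1 - k₂)) ∧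
    a * b * n * g₁ ≠ a * b * n * g₂ := by
  subst hb hc hm hg₁ hk₁ hg₂ hk₂
  refine ⟨by ring, by ring, by ring, ?_⟩
  have ha0 := ha.1
  have hn0 := hn.1
  intro h
  apply hgk
  have : a * (1/4) * n ≠ 0 := by positivity
  exact mul_left_cancel₀ this h
end

section
/- Let A₀, A₁ be q×m real matrices with rank m and b₀, b₁ ∈ ℝ^q lie in the column spaces of A₀, A₁ respectively. Define s_r = (A_rᵀA_r)⁻¹A_rᵀ b_r for r = 0,1 and suppose s₀(j) + s₁(j) > 0 for all j. Then the map (A₀, A₁, b₀, b₁) ↦ (s₀(j)/(s₀(j)+s₁(j)))_{j ∈ Fin m} is well defined and yields the unique vector t ∈ [0,1]^m such that A_r·(t_r ⊙ c) = b_r is solvable with t₀(j) + t₁(j) = 1 where t₁ = 1 − t₀ and c(j) = s₀(j)+s₁(j). -/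
/-!
Full column rank makes `A *ᵥ ·` injective, hence `Aᵀ * A` invertible, so for `b = A *ᵥ x` the
least-squares formula `(Aᵀ * A)⁻¹ *ᵥ (Aᵀ *ᵥ b)` returns `x` itself. Thus `s₀`, `s₁` solve the two
systems, `t ⊙ c = s₀` and `(1 - t) ⊙ c = s₁` by the choice of `t` and `c`, and any other `t'` has
`t' ⊙ c = s₀` by injectivity of `A₀ *ᵥ ·`, so `t' = t` because `c` has no zero entry.
-/

open Matrix

namespace Matrix

variable {m n K : Type*} [Fintype n]

theorem mulVec_injective_of_rank_eq_card [Field K] {A : Matrix m n K}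
    (h : A.rank = Fintype.card n) : Function.Injective A.mulVec := by
  have hker : Module.finrank K (LinearMap.ker A.mulVecLin) = 0 := by
    have := LinearMap.finrank_range_add_finrank_ker A.mulVecLin
    rw [← rank, h, Module.finrank_fintype_fun_eq_card] at this
    omega
  rw [← coe_mulVecLin, ← LinearMap.ker_eq_bot]
  exact Submodule.finrank_eq_zero.mp hker

theorem inv_mul_mulVec_mulVec_mulVec_cancel [Fintype m] [DecidableEq n] [CommRing K]
    {A : Matrix m n K} {B : Matrix n m K} (hBA : IsUnit (B * A))
    (x : n → K) : (B * A)⁻¹ *ᵥ (B *ᵥ (A *ᵥ x)) = x := by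
  rw [mulVec_mulVec, mulVec_mulVec, Matrix.mul_assoc,
    nonsing_inv_mul _ ((isUnit_iff_isUnit_det _).mp hBA), one_mulVec]

variable [Fintype m] [DecidableEq n] [Field K] [LinearOrder K] [IsStrictOrderedRing K]

theorem isUnit_transpose_mul_self_of_injective {A : Matrix m n K}
    (hA : Function.Injective A.mulVec) : IsUnit (Aᵀ * A) := by
  rw [← mulVec_injective_iff_isUnit, ← coe_mulVecLin, ← LinearMap.ker_eq_bot,
    ker_mulVecLin_transpose_mul_self, LinearMap.ker_eq_bot, coe_mulVecLin]
  exact hA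

theorem leastSquares_mulVec_eq_of_rank_eq_card {A : Matrix m n K}
    (h : A.rank = Fintype.card n) (x : n → K) :
    (Aᵀ * A)⁻¹ *ᵥ (Aᵀ *ᵥ (A *ᵥ x)) = x :=
  inv_mul_mulVec_mulVec_mulVec_cancel
    (isUnit_transpose_mul_self_of_injective (mulVec_injective_of_rank_eq_card h)) x

end Matrix

theorem identified_conditional_probabilities
    (q m : ℕ) (A₀ A₁ : Matrix (Fin q) (Fin m) ℝ)
    (hrank₀ : A₀.rank = m) (hrank₁ : A₁.rank = m)
    (b₀ b₁ : Fin q → ℝ)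
    (hb₀ : ∃ s, A₀.mulVec s = b₀) (hb₁ : ∃ s, A₁.mulVec s = b₁)
    (s₀ s₁ : Fin m → ℝ)
    (hs₀ : s₀ = (A₀ᵀ * A₀)⁻¹.mulVec (A₀ᵀ.mulVec b₀))
    (hs₁ : s₁ = (A₁ᵀ * A₁)⁻¹.mulVec (A₁ᵀ.mulVec b₁))
    (hpos : ∀ j, 0 < s₀ j + s₁ j)
    (c t : Fin m → ℝ)
    (hc : ∀ j, c j = s₀ j + s₁ j)
    (ht : ∀ j, t j = s₀ j / (s₀ j + s₁ j)) :
    A₀.mulVec (fun j => t j * c j) = b₀ ∧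
    A₁.mulVec (fun j => (1 - t j) * c j) = b₁ ∧
    ∀ t' : Fin m → ℝ,
      A₀.mulVec (fun j => t' j * c j) = b₀ →
      A₁.mulVec (fun j => (1 - t' j) * c j) = b₁ →
      t' = t := by
  have hcard₀ : A₀.rank = Fintype.card (Fin m) := hrank₀.trans (Fintype.card_fin m).symm
  have hcard₁ : A₁.rank = Fintype.card (Fin m) := hrank₁.trans (Fintype.card_fin m).symm
  obtain ⟨x₀, rfl⟩ := hb₀
  obtain ⟨x₁, rfl⟩ := hb₁
  rw [leastSquares_mulVec_eq_of_rank_eq_card hcard₀] at hs₀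
  rw [leastSquares_mulVec_eq_of_rank_eq_card hcard₁] at hs₁
  subst hs₀ hs₁
  have ht₀ : (fun j => t j * c j) = s₀ :=
    funext fun j => by rw [ht, hc, div_mul_cancel₀ _ (hpos j).ne']
  have ht₁ : (fun j => (1 - t j) * c j) = s₁ := funext fun j => by
    rw [ht, hc, sub_mul, div_mul_cancel₀ _ (hpos j).ne', one_mul, add_sub_cancel_left]
  refine ⟨by rw [ht₀], by rw [ht₁], fun t' h₀ _ => funext fun j => ?_⟩
  have ht'₀ : (fun j => t' j * c j) = s₀ := mulVec_injective_of_rank_eq_card hcard₀ h₀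
  have hcj : c j ≠ 0 := hc j ▸ (hpos j).ne'
  exact mul_right_cancel₀ hcj ((congrFun ht'₀ j).trans (congrFun ht₀ j).symm)
end
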